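/- Let V be a countable index set, let H(x) be a finite-dimensional complex Hilbert space for each x ∈ V, let H = ⊕_{x∈V} H(x) be their Hilbert space (ℓ²-) direct sum, and let P_x ∈ B(H) denote the orthogonal projection onto the summand H(x). Let {A_k}_{k∈K} be a countable family of bounded operators on H such that each A_k satisfies A_k = P_{y_k} A_k P_{x_k} for some vertices x_k, y_k ∈ V, and let 𝔄 be the C*-subalgebra of B(H) generated by {P_x : x ∈ V} ∪ {A_k : k ∈ K}. Then 𝔄 is an AF-algebra: there exists an increasing sequence B₀ ⊆ B₁ ⊆ B₂ ⊆ ⋯ of finite-dimensional *-subalgebras of B(H), each contained in 𝔄, whose union is dense in 𝔄 in the operator norm. -/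

import Mathlib

/-!
Enumerate the generators `P_x`, `A_k` and let `B n` be the *-algebra generated by finitely many
of them, chosen along an increasing exhaustion. Each such finite family lies in the corner
`Q B(H) Q` of the finite-rank projection `Q = ∑ P_v` over the vertices it touches (for `A_k` these
are `x_k` and `y_k`), and this corner is finite-dimensional because it embeds into the
endomorphisms of the finite-dimensional space `range Q`. The union of the `B n` is the *-algebra
generated by all generators, whose closure is `𝔄` by definition.
-/

/-- The orthogonal projection of the Hilbert space direct sum `lp H 2` onto the
summand `H x`. -/
noncomputable def lpProj {V : Type*} [DecidableEq V] (H : V → Type*)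
    [∀ x, NormedAddCommGroup (H x)] [∀ x, InnerProductSpace ℂ (H x)] (x : V) :
    lp H 2 →L[ℂ] lp H 2 :=
  LinearMap.mkContinuous
    { toFun := fun f => lp.single 2 x (f x)
      map_add' := fun f g => by
        apply lp.ext
        funext j
        by_cases h : j = x
        · subst h
          simp [lp.single_apply_self, lp.coeFn_add]
        · simp [lp.single_apply_ne 2 x _ h, lp.coeFn_add]
      map_smul' := fun c f => by
        apply lp.ext
        funext j
        by_cases h : j = x
        · subst h
          simp [lp.single_apply_self, lp.coeFn_smul]
        · simp [lp.single_apply_ne 2 x _ h, lp.coeFn_smul] }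
    1
    (fun f => by
      have h1 : ‖lp.single 2 x (f x)‖ = ‖f x‖ := lp.norm_single (by norm_num) x (f x)
      have h2 : ‖f x‖ ≤ ‖f‖ := lp.norm_apply_le_norm (by norm_num) f x
      simpa [h1] using h2)

open NonUnitalStarAlgebra Filter

section OrthogonalProjections

variable {R : Type*} [NonUnitalSemiring R] {ι : Type*} {p : ι → R}

theorem Finset.sum_mul_of_pairwise_mul_eq_zero (hp : ∀ i, IsIdempotentElem (p i))
    (horth : Pairwise fun i j => p i * p j = 0) {s : Finset ι} {i : ι} (hi : i ∈ s) :
    (∑ j ∈ s, p j) * p i = p i := by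
  rw [Finset.sum_mul, Finset.sum_eq_single_of_mem i hi fun j _ hji => horth hji]
  exact (hp i).eq

theorem Finset.mul_sum_of_pairwise_mul_eq_zero (hp : ∀ i, IsIdempotentElem (p i))
    (horth : Pairwise fun i j => p i * p j = 0) {s : Finset ι} {i : ι} (hi : i ∈ s) :
    p i * ∑ j ∈ s, p j = p i := by
  rw [Finset.mul_sum, Finset.sum_eq_single_of_mem i hi fun j _ hji => horth hji.symm]
  exact (hp i).eq

theorem IsStarProjection.sum_of_pairwise_mul_eq_zero [StarRing R] [DecidableEq ι]
    (hp : ∀ i, IsStarProjection (p i)) (horth : Pairwise fun i j => p i * p j = 0)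
    (s : Finset ι) : IsStarProjection (∑ i ∈ s, p i) := by
  induction s using Finset.induction_on with
  | empty => simp
  | insert i s hi ih =>
    rw [Finset.sum_insert hi]
    refine (hp i).add ih ?_
    rw [Finset.mul_sum]
    exact Finset.sum_eq_zero fun j hj => horth (ne_of_mem_of_not_mem hj hi).symm

end OrthogonalProjections

namespace NonUnitalStarSubalgebra

variable (R : Type*) {A : Type*} [CommSemiring R] [NonUnitalSemiring A] [StarRing A] [Module R A]
  [IsScalarTower R A A] [SMulCommClass R A A]

def corner {p : A} (hp : IsStarProjection p) : NonUnitalStarSubalgebra R A where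
  carrier := {a | p * a * p = a}
  zero_mem' := by simp
  add_mem' {a b} ha hb := by
    simp only [Set.mem_ofPred_eq] at *
    rw [mul_add, add_mul, ha, hb]
  mul_mem' {a b} ha hb := by
    simp only [Set.mem_ofPred_eq] at *
    have hpa : p * a = a := by rw [← ha, ← mul_assoc, ← mul_assoc, hp.isIdempotentElem.eq]
    have hbp : b * p = b := by rw [← hb, mul_assoc, hp.isIdempotentElem.eq]
    calc p * (a * b) * p = (p * a) * (b * p) := by simp only [mul_assoc]
      _ = a * b := by rw [hpa, hbp]
  smul_mem' c a ha := by
    simp only [Set.mem_ofPred_eq] at *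
    rw [mul_smul_comm, smul_mul_assoc, ha]
  star_mem' {a} ha := by
    simp only [Set.mem_ofPred_eq] at *
    rw [← hp.isSelfAdjoint.star_eq, ← star_mul, ← star_mul, ← mul_assoc, ha]

variable {R}

theorem mem_corner {p : A} {hp : IsStarProjection p} {a : A} :
    a ∈ corner R hp ↔ p * a * p = a :=
  Iff.rfl

theorem mul_mul_mem_corner {p : A} (hp : IsStarProjection p) {q r : A} (hq : p * q = q)
    (hr : r * p = r) (b : A) : q * b * r ∈ corner R hp := by
  rw [mem_corner, ← mul_assoc, ← mul_assoc, hq, mul_assoc, hr]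

end NonUnitalStarSubalgebra

theorem NonUnitalStarSubalgebra.finiteDimensional_of_le {R A : Type*} [Field R] [StarRing R]
    [NonUnitalRing A] [StarRing A] [Module R A] [IsScalarTower R A A] [SMulCommClass R A A]
    [StarModule R A] {S T : NonUnitalStarSubalgebra R A} (h : S ≤ T) [FiniteDimensional R T] :
    FiniteDimensional R S :=
  .of_injective (LinearMapClass.linearMap (inclusion h)) (inclusion_injective h)

theorem ContinuousLinearMap.finiteDimensional_corner {𝕜 E : Type*} [RCLike 𝕜]
    [NormedAddCommGroup E] [InnerProductSpace 𝕜 E] [CompleteSpace E] {p : E →L[𝕜] E}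
    (hp : IsStarProjection p) (hfin : (p : E →ₗ[𝕜] E).HasFiniteRange) :
    FiniteDimensional 𝕜 (NonUnitalStarSubalgebra.corner 𝕜 hp) := by
  let W := LinearMap.range (p : E →ₗ[𝕜] E)
  have : FiniteDimensional 𝕜 W := Module.Finite.iff_fg.mpr hfin
  -- an operator of the corner is determined by its compression to the range of `p`
  let compress : NonUnitalStarSubalgebra.corner 𝕜 hp →ₗ[𝕜] Module.End 𝕜 W :=
    { toFun := fun T =>
        (p : E →ₗ[𝕜] E).rangeRestrict ∘ₗ (T : E →L[𝕜] E) ∘ₗ W.subtype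
      map_add' := fun S T => by ext; simp
      map_smul' := fun c T => by ext; simp }
  refine .of_injective compress ((injective_iff_map_eq_zero compress).mpr fun T hT => ?_)
  ext f
  have hcompress :=
    congrArg Subtype.val (LinearMap.congr_fun hT ⟨p f, LinearMap.mem_range_self _ f⟩)
  calc (T : E →L[𝕜] E) f = p ((T : E →L[𝕜] E) (p f)) := (congrArg (· f) T.2).symm
    _ = 0 := hcompress

theorem NonUnitalStarAlgebra.exists_monotone_finset_iUnion_adjoin_image_eq (R : Type*)
    {A : Type*} [CommSemiring R] [StarRing R] [NonUnitalSemiring A] [StarRing A] [Module R A]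
    [IsScalarTower R A A] [SMulCommClass R A A] [StarModule R A] {ι : Type*} [Countable ι]
    (g : ι → A) :
    ∃ u : ℕ → Finset ι, Monotone u ∧
      ⋃ n, (adjoin R (g '' u n) : Set A) = adjoin R (Set.range g) := by
  obtain ⟨u, hu, hu_top⟩ := exists_seq_monotone_tendsto_atTop_atTop (Finset ι)
  have hmono : Monotone fun n => adjoin R (g '' u n) := fun m n h =>
    adjoin_mono (Set.image_mono (hu h))
  refine ⟨u, hu, ?_⟩
  rw [← NonUnitalStarSubalgebra.coe_iSup_of_directed hmono.directed_le]
  congr 1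
  refine le_antisymm (iSup_le fun n => adjoin_mono (Set.image_subset_range g _)) ?_
  refine adjoin_le ?_
  rintro _ ⟨i, rfl⟩
  obtain ⟨n, hn⟩ := (tendsto_atTop.mp hu_top {i}).exists
  exact le_iSup (fun n => adjoin R (g '' u n)) n
    (subset_adjoin R _ (Set.mem_image_of_mem g (hn (Finset.mem_singleton_self i))))

section lpProj

variable {V : Type*} [DecidableEq V] (H : V → Type*) [∀ x, NormedAddCommGroup (H x)]
  [∀ x, InnerProductSpace ℂ (H x)]

theorem lpProj_apply (v : V) (f : lp H 2) : lpProj H v f = lp.single 2 v (f v) :=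
  rfl

theorem isIdempotentElem_lpProj (v : V) : IsIdempotentElem (lpProj H v) := by
  ext f
  simp [lpProj_apply]

theorem lpProj_mul_lpProj_of_ne {v w : V} (h : v ≠ w) : lpProj H v * lpProj H w = 0 := by
  ext f
  simp [lpProj_apply, lp.single_apply_ne 2 w _ h, h]

theorem isStarProjection_lpProj [∀ x, CompleteSpace (H x)] (v : V) :
    IsStarProjection (lpProj H v) := by
  refine ⟨isIdempotentElem_lpProj H v, ?_⟩
  rw [isSelfAdjoint_iff, ContinuousLinearMap.star_eq_adjoint, eq_comm,
    ContinuousLinearMap.eq_adjoint_iff]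
  intro f g
  rw [lpProj_apply, lpProj_apply, lp.inner_single_left, lp.inner_single_right]

theorem lpProj_hasFiniteRange [∀ x, FiniteDimensional ℂ (H x)] (v : V) :
    (lpProj H v : lp H 2 →ₗ[ℂ] lp H 2).HasFiniteRange := by
  have hle : LinearMap.range (lpProj H v : lp H 2 →ₗ[ℂ] lp H 2) ≤
      LinearMap.range (lp.singleContinuousLinearMap ℂ H 2 v : H v →ₗ[ℂ] lp H 2) := by
    rintro _ ⟨f, rfl⟩
    exact ⟨f v, rfl⟩
  exact Module.Finite.iff_fg.mp (Submodule.finiteDimensional_of_le hle)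

end lpProj

open NonUnitalStarSubalgebra in
theorem finiteDimensional_adjoin_finset_lpProj_kraus {V : Type*} [DecidableEq V]
    (H : V → Type*) [∀ x, NormedAddCommGroup (H x)] [∀ x, InnerProductSpace ℂ (H x)]
    [∀ x, FiniteDimensional ℂ (H x)] {K : Type*}
    (A : K → (lp H 2 →L[ℂ] lp H 2)) (x y : K → V)
    (hA : ∀ k, A k = lpProj H (y k) * A k * lpProj H (x k)) (s : Finset (V ⊕ K)) :
    FiniteDimensional ℂ (adjoin ℂ (Sum.elim (lpProj H) A '' s)) := by
  let Φ : Finset V := s.biUnion (Sum.elim (fun v => {v}) fun k => {x k, y k})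
  let Q : lp H 2 →L[ℂ] lp H 2 := ∑ v ∈ Φ, lpProj H v
  have horth : Pairwise fun v w => lpProj H v * lpProj H w = 0 :=
    fun _ _ => lpProj_mul_lpProj_of_ne H
  have hQ : IsStarProjection Q :=
    .sum_of_pairwise_mul_eq_zero (isStarProjection_lpProj H) horth Φ
  have hQ_fin : (Q : lp H 2 →ₗ[ℂ] lp H 2).HasFiniteRange := by
    rw [ContinuousLinearMap.toLinearMap_sum, ← LinearMap.mem_finiteRange_iff_hasFiniteRange]
    exact Submodule.sum_mem _ fun v _ =>
      LinearMap.mem_finiteRange_iff_hasFiniteRange.mpr (lpProj_hasFiniteRange H v)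
  have hQ_left {v : V} (hv : v ∈ Φ) : Q * lpProj H v = lpProj H v :=
    Finset.sum_mul_of_pairwise_mul_eq_zero (isIdempotentElem_lpProj H) horth hv
  have hQ_right {v : V} (hv : v ∈ Φ) : lpProj H v * Q = lpProj H v :=
    Finset.mul_sum_of_pairwise_mul_eq_zero (isIdempotentElem_lpProj H) horth hv
  have hgen : Sum.elim (lpProj H) A '' s ⊆ corner ℂ hQ := by
    rintro _ ⟨v | k, hi, rfl⟩
    · have hv : v ∈ Φ := Finset.mem_biUnion.mpr ⟨_, hi, Finset.mem_singleton_self v⟩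
      rw [SetLike.mem_coe, Sum.elim_inl, mem_corner, hQ_left hv, hQ_right hv]
    · have hx : x k ∈ Φ := Finset.mem_biUnion.mpr ⟨_, hi, by simp⟩
      have hy : y k ∈ Φ := Finset.mem_biUnion.mpr ⟨_, hi, by simp⟩
      rw [SetLike.mem_coe, Sum.elim_inr, hA k]
      exact mul_mul_mem_corner hQ (hQ_left hy) (hQ_right hx) _
  have := ContinuousLinearMap.finiteDimensional_corner hQ hQ_fin
  exact finiteDimensional_of_le (adjoin_le hgen)

/-- The C*-algebra of a quantum causal history (generated by the vertex
projections and edge Kraus operators, each supported between two finite-dimensional vertex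
summands) is an AF-algebra: it is the closure of an increasing union of finite-dimensional
*-subalgebras contained in it. -/
theorem qch_algebra_is_AF
    {V : Type*} [Countable V] [DecidableEq V]
    (H : V → Type*) [∀ x, NormedAddCommGroup (H x)] [∀ x, InnerProductSpace ℂ (H x)]
    [∀ x, FiniteDimensional ℂ (H x)]
    {K : Type*} [Countable K]
    (A : K → (lp H 2 →L[ℂ] lp H 2)) (x y : K → V)
    (hA : ∀ k, A k = lpProj H (y k) * A k * lpProj H (x k))
    (𝔄 : NonUnitalStarSubalgebra ℂ (lp H 2 →L[ℂ] lp H 2))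
    (h𝔄 : 𝔄 = (NonUnitalStarAlgebra.adjoin ℂ
        (Set.range (lpProj H) ∪ Set.range A)).topologicalClosure) :
    ∃ B : ℕ → NonUnitalStarSubalgebra ℂ (lp H 2 →L[ℂ] lp H 2),
      Monotone B ∧
      (∀ n, FiniteDimensional ℂ (B n)) ∧
      (∀ n, (B n : Set (lp H 2 →L[ℂ] lp H 2)) ⊆ 𝔄) ∧
      closure (⋃ n, (B n : Set (lp H 2 →L[ℂ] lp H 2))) =
        (𝔄 : Set (lp H 2 →L[ℂ] lp H 2)) := by
  let g : V ⊕ K → (lp H 2 →L[ℂ] lp H 2) := Sum.elim (lpProj H) A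
  have hg : Set.range g = Set.range (lpProj H) ∪ Set.range A := Set.Sum.elim_range _ _
  obtain ⟨u, hu, hu_union⟩ := exists_monotone_finset_iUnion_adjoin_image_eq ℂ g
  refine ⟨fun n => adjoin ℂ (g '' u n), fun m n h => adjoin_mono (Set.image_mono (hu h)),
    fun n => finiteDimensional_adjoin_finset_lpProj_kraus H A x y hA (u n), fun n => ?_, ?_⟩
  · rw [h𝔄, ← hg]
    exact (adjoin_mono (Set.image_subset_range g _)).trans
      (NonUnitalStarSubalgebra.le_topologicalClosure _)
  · rw [hu_union, h𝔄, hg]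
    rfl
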